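/- For every k ≥ 1, the number of partitions with perimeter exactly k is 2^{k−1}. -/

import Mathlib

/-- A partition: weakly decreasing finite sequence of positive integers. -/
def IsPartition (l : List ℕ) : Prop := (∀ x ∈ l, 0 < x) ∧ l.Pairwise (· ≥ ·)

/-- The perimeter of a partition: largest part plus number of parts minus one. -/
def perimeter (l : List ℕ) : ℕ := l.headI + l.length - 1

/-!
Shortening the boundary path by its first step is a two-to-one map from partitions of perimeter
`n + 1` onto partitions of perimeter `n` when `n ≥ 1`: if `λ₁ > λ₂` shrink the first part by one,
otherwise (`λ₁ = λ₂`) delete the first part. The Boolean records which case occurred, and the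
inverse either enlarges or duplicates the first part. Since `[1]` is the only partition of
perimeter `1`, the count doubles from `1` at every step.
-/

lemma IsPartition.le_headI {l : List ℕ} (hl : IsPartition l) : ∀ x ∈ l, x ≤ l.headI := by
  cases l with
  | nil => simp
  | cons a t =>
    intro x hx
    rcases List.mem_cons.1 hx with rfl | hx
    · rfl
    · exact (List.pairwise_cons.1 hl.2).1 x hx

lemma IsPartition.headI_pos {l : List ℕ} (hl : IsPartition l) (hne : l ≠ []) : 0 < l.headI := by
  obtain ⟨a, t, rfl⟩ := List.exists_cons_of_ne_nil hne
  exact hl.1 a List.mem_cons_self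

lemma isPartition_cons_iff {a : ℕ} {t : List ℕ} :
    IsPartition (a :: t) ↔ 0 < a ∧ t.headI ≤ a ∧ IsPartition t := by
  simp only [IsPartition, List.mem_cons, forall_eq_or_imp, List.pairwise_cons]
  constructor
  · rintro ⟨⟨ha, hpos⟩, hle, hsorted⟩
    refine ⟨ha, ?_, hpos, hsorted⟩
    cases t with
    | nil => exact Nat.zero_le a
    | cons b s => exact hle b List.mem_cons_self
  · rintro ⟨ha, hhead, ht⟩
    exact ⟨⟨ha, ht.1⟩, fun x hx => (IsPartition.le_headI ht x hx).trans hhead, ht.2⟩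

lemma perimeter_cons (a : ℕ) (t : List ℕ) : perimeter (a :: t) = a + t.length := by
  simp [perimeter]

lemma ne_nil_of_perimeter_pos {l : List ℕ} (h : 0 < perimeter l) : l ≠ [] := by
  rintro rfl
  simp [perimeter] at h

lemma isPartition_and_perimeter_eq_one_iff {l : List ℕ} :
    IsPartition l ∧ perimeter l = 1 ↔ l = [1] := by
  constructor
  · rintro ⟨hl, hper⟩
    obtain ⟨a, t, rfl⟩ := List.exists_cons_of_ne_nil (ne_nil_of_perimeter_pos (l := l) (by omega))
    have ha := (isPartition_cons_iff.1 hl).1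
    rw [perimeter_cons] at hper
    have ht : t.length = 0 := by omega
    rw [List.length_eq_zero_iff.1 ht, show a = 1 by omega]
  · rintro rfl
    exact ⟨isPartition_cons_iff.2 ⟨Nat.one_pos, Nat.zero_le 1, by simp [IsPartition]⟩, rfl⟩

def grow (b : Bool) (m : List ℕ) : List ℕ :=
  if b then (m.headI + 1) :: m.tail else m.headI :: m

def shrink : List ℕ → Bool × List ℕ
  | [] => (false, [])
  | a :: t => if t.headI < a then (true, (a - 1) :: t) else (false, t)

lemma IsPartition.grow {m : List ℕ} (hm : IsPartition m) (hne : m ≠ []) (b : Bool) :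
    IsPartition (grow b m) := by
  obtain ⟨a, t, rfl⟩ := List.exists_cons_of_ne_nil hne
  obtain ⟨ha, hhead, ht⟩ := isPartition_cons_iff.1 hm
  cases b
  · exact isPartition_cons_iff.2 ⟨ha, le_rfl, hm⟩
  · exact isPartition_cons_iff.2 ⟨a.succ_pos, hhead.trans a.le_succ, ht⟩

lemma perimeter_grow {m : List ℕ} (hne : m ≠ []) (b : Bool) :
    perimeter (grow b m) = perimeter m + 1 := by
  obtain ⟨a, t, rfl⟩ := List.exists_cons_of_ne_nil hne
  cases b <;> simp [grow, perimeter_cons] <;> omega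

lemma IsPartition.shrink {l : List ℕ} (hl : IsPartition l) (h2 : 2 ≤ perimeter l) :
    IsPartition (shrink l).2 := by
  obtain ⟨a, t, rfl⟩ := List.exists_cons_of_ne_nil (ne_nil_of_perimeter_pos (l := l) (by omega))
  obtain ⟨ha, hhead, ht⟩ := isPartition_cons_iff.1 hl
  rw [perimeter_cons] at h2
  simp only [_root_.shrink]
  split_ifs with hlt
  · -- `a - 1` stays positive: either `t` is empty and `a ≥ 2`, or `0 < t.headI < a`
    have : 2 ≤ a := by
      rcases eq_or_ne t [] with rfl | htne
      · simpa using h2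
      · have := ht.headI_pos htne
        omega
    exact isPartition_cons_iff.2 ⟨by omega, by omega, ht⟩
  · exact ht

lemma perimeter_shrink {l : List ℕ} (hl : IsPartition l) (hne : l ≠ []) :
    perimeter (shrink l).2 + 1 = perimeter l := by
  obtain ⟨a, t, rfl⟩ := List.exists_cons_of_ne_nil hne
  obtain ⟨ha, hhead, -⟩ := isPartition_cons_iff.1 hl
  simp only [shrink, perimeter_cons]
  split_ifs with hlt
  · simp only [perimeter_cons]
    omega
  · have : t.headI = a := by omega
    simp only [perimeter, this]
    omega

lemma grow_shrink {l : List ℕ} (hl : IsPartition l) (hne : l ≠ []) :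
    grow (shrink l).1 (shrink l).2 = l := by
  obtain ⟨a, t, rfl⟩ := List.exists_cons_of_ne_nil hne
  obtain ⟨ha, hhead, -⟩ := isPartition_cons_iff.1 hl
  simp only [shrink]
  split_ifs with hlt
  · simp only [grow, List.headI_cons, List.tail_cons, if_true]
    congr 1
    omega
  · simp only [grow, Bool.false_eq_true, if_false]
    congr 1
    omega

lemma shrink_grow {m : List ℕ} (hm : IsPartition m) (hne : m ≠ []) (b : Bool) :
    shrink (grow b m) = (b, m) := by
  obtain ⟨a, t, rfl⟩ := List.exists_cons_of_ne_nil hne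
  obtain ⟨-, hhead, -⟩ := isPartition_cons_iff.1 hm
  cases b
  · simp [grow, shrink]
  · simp only [grow, shrink, List.headI_cons, List.tail_cons, if_true]
    rw [if_pos (by omega)]
    simp

abbrev PartitionsOfPerimeter (k : ℕ) : Type := {l : List ℕ // IsPartition l ∧ perimeter l = k}

lemma PartitionsOfPerimeter.ne_nil {n : ℕ} (hn : 1 ≤ n) (l : PartitionsOfPerimeter n) :
    l.1 ≠ [] :=
  ne_nil_of_perimeter_pos (hn.trans_eq l.2.2.symm)

def shrinkEquiv (n : ℕ) (hn : 1 ≤ n) :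
    PartitionsOfPerimeter (n + 1) ≃ Bool × PartitionsOfPerimeter n where
  toFun l := ((shrink l.1).1, ⟨(shrink l.1).2, l.2.1.shrink (by omega),
    by have := perimeter_shrink l.2.1 (l.ne_nil (Nat.le_add_left 1 n)); omega⟩)
  invFun p := ⟨grow p.1 p.2.1, p.2.2.1.grow (p.2.ne_nil hn) p.1,
    by rw [perimeter_grow (p.2.ne_nil hn), p.2.2.2]⟩
  left_inv l := Subtype.ext (grow_shrink l.2.1 (l.ne_nil (Nat.le_add_left 1 n)))
  right_inv p := by
    obtain ⟨hfst, hsnd⟩ := Prod.ext_iff.1 (shrink_grow p.2.2.1 (p.2.ne_nil hn) p.1)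
    exact Prod.ext hfst (Subtype.ext hsnd)

theorem count_by_perimeter (k : ℕ) (hk : 1 ≤ k) :
    Nat.card {l : List ℕ // IsPartition l ∧ perimeter l = k} = 2 ^ (k - 1) := by
  induction k, hk using Nat.le_induction with
  | base => simp_rw [isPartition_and_perimeter_eq_one_iff, Nat.card_unique, Nat.sub_self, pow_zero]
  | succ n hn ih =>
    rw [Nat.card_congr (shrinkEquiv n hn), Nat.card_prod, ih, Nat.card_eq_fintype_card (α := Bool),
      Fintype.card_bool, ← pow_succ']
    congr 1
    omega
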